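/- arXiv:1901.00847 — 4 statements merged into one kernel-verified Lean document; each statement's English description precedes it below -/
import Mathlib

section
/- In the local plactic algebra, for all indices i ≥ k ≥ j the 'staircase' monomial a_i a_{i-1} ⋯ a_{j+1} a_j commutes with a_k, i.e. (a_i a_{i-1} ⋯ a_{j+1} a_j) a_k = a_k (a_i a_{i-1} ⋯ a_{j+1} a_j). -/
inductive PlacticRel (K : Type*) [CommRing K] (N : ℕ) :
    FreeAlgebra K (Fin (N - 1)) → FreeAlgebra K (Fin (N - 1)) → Prop
  | plac1 : ∀ i j : Fin (N - 1), (i : ℕ) = (j : ℕ) + 1 →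
      PlacticRel K N (FreeAlgebra.ι K i * FreeAlgebra.ι K j * FreeAlgebra.ι K i)
        (FreeAlgebra.ι K i * FreeAlgebra.ι K i * FreeAlgebra.ι K j)
  | plac2 : ∀ i j : Fin (N - 1), (j : ℕ) = (i : ℕ) + 1 →
      PlacticRel K N (FreeAlgebra.ι K i * FreeAlgebra.ι K j * FreeAlgebra.ι K i)
        (FreeAlgebra.ι K j * FreeAlgebra.ι K i * FreeAlgebra.ι K i)
  | comm : ∀ i j : Fin (N - 1), (i : ℕ) + 1 < (j : ℕ) →
      PlacticRel K N (FreeAlgebra.ι K i * FreeAlgebra.ι K j)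
        (FreeAlgebra.ι K j * FreeAlgebra.ι K i)

/-- The local plactic algebra `P_N`, with generators `a_1, …, a_{N-1}`. -/
abbrev PlacticAlgebra (K : Type*) [CommRing K] (N : ℕ) := RingQuot (PlacticRel K N)

/-- The generator `a_i` of the local plactic algebra, for `1 ≤ i ≤ N-1` (junk value `0`
outside that range). -/
noncomputable def pa (K : Type*) [CommRing K] (N : ℕ) (i : ℕ) : PlacticAlgebra K N :=
  if h : 1 ≤ i ∧ i ≤ N - 1 then
    RingQuot.mkAlgHom K (PlacticRel K N) (FreeAlgebra.ι K ⟨i - 1, by omega⟩) else 0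

/-- The staircase monomial `a_i a_{i-1} ⋯ a_{j+1} a_j` in the local plactic algebra. -/
noncomputable def stairPl (K : Type*) [CommRing K] (N j i : ℕ) : PlacticAlgebra K N :=
  ((List.range (i + 1 - j)).map fun t => pa K N (i - t)).prod

section Aux

variable (K : Type*) [CommRing K] (N : ℕ)

lemma helper_comm_left {α : Type*} [Monoid α] {a b : α} (h : Commute a b) (x : α) :
    a * (b * x) = b * (a * x) := by
  rw [← mul_assoc, h.eq, mul_assoc]

lemma pa_eq (c : ℕ) (h1 : 1 ≤ c) (h2 : c ≤ N - 1) :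
    pa K N c = RingQuot.mkAlgHom K (PlacticRel K N) (FreeAlgebra.ι K ⟨c - 1, by omega⟩) := by
  rw [pa, dif_pos ⟨h1, h2⟩]

lemma pa_rel1 (c : ℕ) (h1 : 2 ≤ c) (h2 : c ≤ N - 1) :
    pa K N c * pa K N (c - 1) * pa K N c = pa K N c * pa K N c * pa K N (c - 1) := by
  rw [pa_eq K N c (by omega) h2, pa_eq K N (c - 1) (by omega) (by omega),
    ← map_mul, ← map_mul, ← map_mul, ← map_mul]
  exact RingQuot.mkAlgHom_rel K
    (PlacticRel.plac1 ⟨c - 1, by omega⟩ ⟨c - 1 - 1, by omega⟩ (by simp; omega))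

lemma pa_rel2 (c : ℕ) (h1 : 1 ≤ c) (h2 : c + 1 ≤ N - 1) :
    pa K N c * pa K N (c + 1) * pa K N c = pa K N (c + 1) * pa K N c * pa K N c := by
  rw [pa_eq K N c h1 (by omega), pa_eq K N (c + 1) (by omega) h2,
    ← map_mul, ← map_mul, ← map_mul, ← map_mul]
  exact RingQuot.mkAlgHom_rel K
    (PlacticRel.plac2 ⟨c - 1, by omega⟩ ⟨c + 1 - 1, by omega⟩ (by simp; omega))

lemma pa_rel1' (c : ℕ) (h1 : 2 ≤ c) (h2 : c ≤ N - 1) (x : PlacticAlgebra K N) :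
    pa K N c * (pa K N (c - 1) * (pa K N c * x)) =
      pa K N c * (pa K N c * (pa K N (c - 1) * x)) := by
  rw [← mul_assoc, ← mul_assoc, pa_rel1 K N c h1 h2, mul_assoc, mul_assoc]

lemma pa_rel2' (c : ℕ) (h1 : 1 ≤ c) (h2 : c + 1 ≤ N - 1) (x : PlacticAlgebra K N) :
    pa K N c * (pa K N (c + 1) * (pa K N c * x)) =
      pa K N (c + 1) * (pa K N c * (pa K N c * x)) := by
  rw [← mul_assoc, ← mul_assoc, pa_rel2 K N c h1 h2, mul_assoc, mul_assoc]

lemma pa_commute (a b : ℕ) (h : a + 1 < b) : Commute (pa K N a) (pa K N b) := by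
  unfold pa
  split_ifs with h1 h2 h2
  · show _ * _ = _ * _
    rw [← map_mul, ← map_mul]
    exact RingQuot.mkAlgHom_rel K
      (PlacticRel.comm ⟨a - 1, by omega⟩ ⟨b - 1, by omega⟩ (by simp; omega))
  · exact Commute.zero_right _
  · exact Commute.zero_left _
  · exact Commute.zero_left _

lemma pa_commute_stair (c j m : ℕ) (h : m + 1 < c ∨ c + 1 < j) :
    Commute (pa K N c) (stairPl K N j m) := by
  apply Commute.list_prod_right
  intro x hx
  simp only [List.mem_map, List.mem_range] at hx
  obtain ⟨t, ht, rfl⟩ := hx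
  rcases h with h | h
  · exact (pa_commute K N (m - t) c (by omega)).symm
  · exact pa_commute K N c (m - t) (by omega)

lemma stairPl_single (j : ℕ) : stairPl K N j j = pa K N j := by
  have e : j + 1 - j = 1 := by omega
  rw [stairPl, e]
  simp [List.range_succ]

lemma stairPl_split (j m i : ℕ) (h1 : j ≤ m) (hm : 1 ≤ m) (h2 : m ≤ i + 1) :
    stairPl K N j i = stairPl K N m i * stairPl K N j (m - 1) := by
  unfold stairPl
  have e : i + 1 - j = (i + 1 - m) + (m - j) := by omega
  rw [e, List.range_add, List.map_append, List.prod_append]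
  congr 1
  rw [List.map_map]
  have e2 : m - 1 + 1 - j = m - j := by omega
  rw [e2]
  refine congrArg List.prod (List.map_congr_left fun t ht => ?_)
  simp only [Function.comp_apply]
  congr 1
  omega

lemma stairPl_cons (j i : ℕ) (h2 : j ≤ i) (hi : 1 ≤ i) :
    stairPl K N j i = pa K N i * stairPl K N j (i - 1) := by
  rw [stairPl_split K N j i i h2 hi (by omega), stairPl_single]

lemma stairPl_snoc (j i : ℕ) (hj : 1 ≤ j) (h2 : j ≤ i) :
    stairPl K N j i = stairPl K N (j + 1) i * pa K N j := by
  rw [stairPl_split K N j (j + 1) i (by omega) (by omega) (by omega)]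
  simp only [Nat.add_sub_cancel, stairPl_single]

lemma stairPl_top (j c : ℕ) (hj : 1 ≤ j) (hjc : j ≤ c) (hc : c ≤ N - 1) :
    stairPl K N j c * pa K N c = pa K N c * stairPl K N j c := by
  rcases eq_or_lt_of_le hjc with rfl | hlt
  · rw [stairPl_single]
  · have h2 : 2 ≤ c := by omega
    rw [stairPl_cons K N j c (by omega) (by omega),
      stairPl_cons K N j (c - 1) (by omega) (by omega)]
    simp only [mul_assoc]
    rw [← (pa_commute_stair K N c j (c - 1 - 1) (Or.inl (by omega))).eq]
    exact pa_rel1' K N c h2 hc _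

end Aux

/-- In the local plactic algebra, `(a_i a_{i-1} ⋯ a_{j+1} a_j) a_c = a_c (a_i ⋯ a_j)`
for `j ≤ c ≤ i`. -/
theorem stmt2 (K : Type*) [Field K] (N : ℕ) (hN : 3 ≤ N) (i c j : ℕ)
    (hj : 1 ≤ j) (hjc : j ≤ c) (hci : c ≤ i) (hi : i ≤ N - 1) :
    stairPl K N j i * pa K N c = pa K N c * stairPl K N j i := by
  rcases eq_or_lt_of_le hci with rfl | hlt
  · exact stairPl_top K N j c hj hjc hi
  · have hA : Commute (pa K N c) (stairPl K N (c + 2) i) :=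
      pa_commute_stair K N c (c + 2) i (Or.inr (by omega))
    have htop : stairPl K N j c * pa K N c = pa K N c * stairPl K N j c :=
      stairPl_top K N j c hj hjc (by omega)
    have hcons : stairPl K N j c = pa K N c * stairPl K N j (c - 1) :=
      stairPl_cons K N j c hjc (by omega)
    rw [stairPl_split K N j (c + 1) i (by omega) (by omega) (by omega),
      Nat.add_sub_cancel, stairPl_snoc K N (c + 1) i (by omega) (by omega)]
    simp only [mul_assoc]
    rw [htop, hcons, ← pa_rel2' K N c (by omega) (by omega) (stairPl K N j (c - 1)),
      helper_comm_left hA.symm]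
end

section
/- The assignment sending the generator a_i (for 1 ≤ i ≤ N-2) to the operator on k[x_1,...,x_{N-1},x_0] which maps a monomial x_1^{k_1}⋯x_{N-1}^{k_{N-1}}x_0^{k_0} to x_1^{k_1}⋯x_i^{k_i-1}x_{i+1}^{k_{i+1}+1}⋯x_0^{k_0} if k_i > 0 and to 0 otherwise, and sending a_{N-1} to the operator which maps the monomial to x_1^{k_1}⋯x_{N-1}^{k_{N-1}-1}x_0^{k_0+1} if k_{N-1} > 0 and to 0 otherwise, extends to a well-defined algebra homomorphism from the local plactic algebra P_N to the endomorphism algebra of k[x_1,...,x_{N-1},x_0]. -/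
/-- The particle-moving operator `ρ(a_i)` on `K[x_1, …, x_{N-1}, x_0]` (realized as
`MvPolynomial (Fin N) K`, where the variable of index `0` is `x_0`): it sends a monomial with
positive exponent at `x_i` to the monomial with the exponent of `x_i` decreased by `1` and that
of `x_{i+1}` (that is, `x_0` when `i = N-1`) increased by `1`, and kills other monomials. -/
noncomputable def rho (K : Type*) [Field K] (N : ℕ) (i : ℕ) :
    Module.End K (MvPolynomial (Fin N) K) :=
  (MvPolynomial.basisMonomials (Fin N) K).constr K fun m =>
    if h : 1 ≤ i ∧ i < N then
      if 0 < m ⟨i, h.2⟩ then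
        (MvPolynomial.basisMonomials (Fin N) K)
          ((m.update ⟨i, h.2⟩ (m ⟨i, h.2⟩ - 1)).update
            ⟨(i + 1) % N, Nat.mod_lt _ (by omega)⟩
            ((m.update ⟨i, h.2⟩ (m ⟨i, h.2⟩ - 1)) ⟨(i + 1) % N, Nat.mod_lt _ (by omega)⟩ + 1))
      else 0
    else 0

/-- One particle moves from site `s` to site `t`. -/
noncomputable def upd {N : ℕ} (m : Fin N →₀ ℕ) (s t : Fin N) : Fin N →₀ ℕ :=
  (m.update s (m s - 1)).update t (m t + 1)

lemma upd_apply {N : ℕ} (m : Fin N →₀ ℕ) (s t x : Fin N) :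
    upd m s t x = if x = t then m t + 1 else if x = s then m s - 1 else m x := by
  simp [upd, Finsupp.coe_update, Function.update_apply]

lemma rho_b (K : Type*) [Field K] (N : ℕ) (i : ℕ) (h1 : 1 ≤ i) (h2 : i < N) (t : ℕ)
    (htN : t < N) (ht : (i + 1) % N = t) (m : Fin N →₀ ℕ) :
    rho K N i (MvPolynomial.basisMonomials (Fin N) K m) =
    if 0 < m ⟨i, h2⟩ then
      (MvPolynomial.basisMonomials (Fin N) K) (upd m ⟨i, h2⟩ ⟨t, htN⟩)
    else 0 := by
  rw [rho, Module.Basis.constr_basis, dif_pos ⟨h1, h2⟩]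
  congr 1
  have hIt : (⟨(i + 1) % N, Nat.mod_lt _ (by omega)⟩ : Fin N) = ⟨t, htN⟩ := Fin.ext ht
  rw [hIt]
  unfold upd
  congr 1
  rw [Finsupp.coe_update, Function.update_of_ne]
  have hti : t ≠ i := by
    rcases Nat.lt_or_ge (i + 1) N with h | h
    · rw [Nat.mod_eq_of_lt h] at ht; omega
    · have hN : i + 1 = N := by omega
      rw [hN, Nat.mod_self] at ht; omega
  intro h
  exact hti (show t = i by simpa [Fin.ext_iff] using h)

lemma rel1 (K : Type*) [Field K] (N : ℕ) (p q : ℕ) (hq1 : 1 ≤ q) (hp : p = q + 1)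
    (hpN : p < N) :
    rho K N p * rho K N q * rho K N p = rho K N p * rho K N p * rho K N q := by
  have hqN : q < N := by omega
  have hp1 : 1 ≤ p := by omega
  have hqt : (q + 1) % N = p := by rw [Nat.mod_eq_of_lt (by omega)]; omega
  obtain ⟨u, huN, hut, hup, huq⟩ :
      ∃ u, u < N ∧ (p + 1) % N = u ∧ u ≠ p ∧ u ≠ q := by
    rcases Nat.lt_or_ge (p + 1) N with h | h
    · exact ⟨p + 1, h, Nat.mod_eq_of_lt h, by omega, by omega⟩
    · exact ⟨0, by omega, by rw [show p + 1 = N by omega, Nat.mod_self], by omega, by omega⟩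
  refine Module.Basis.ext (MvPolynomial.basisMonomials (Fin N) K) fun m => ?_
  simp only [Module.End.mul_apply]
  rw [rho_b K N p hp1 hpN u huN hut m, rho_b K N q hq1 hqN p hpN hqt m]
  by_cases h1 : 0 < m ⟨p, hpN⟩ <;> by_cases h2 : 0 < m ⟨q, hqN⟩
  · rw [if_pos h1, if_pos h2]
    rw [rho_b K N q hq1 hqN p hpN hqt]
    rw [if_pos (by simp only [upd_apply, Fin.mk.injEq]; split_ifs <;> omega)]
    rw [rho_b K N p hp1 hpN u huN hut]
    rw [if_pos (by simp only [upd_apply, Fin.mk.injEq]; split_ifs <;> omega)]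
    rw [rho_b K N p hp1 hpN u huN hut]
    rw [if_pos (by simp only [upd_apply, Fin.mk.injEq]; split_ifs <;> omega)]
    rw [rho_b K N p hp1 hpN u huN hut]
    rw [if_pos (by simp only [upd_apply, Fin.mk.injEq]; split_ifs <;> omega)]
    congr 1
    ext x
    simp only [upd_apply, Fin.ext_iff]
    split_ifs <;> omega
  · rw [if_pos h1, if_neg h2, map_zero, map_zero]
    rw [rho_b K N q hq1 hqN p hpN hqt]
    rw [if_neg (by simp only [upd_apply, Fin.mk.injEq]; split_ifs <;> omega)]
    rw [map_zero]
  · rw [if_neg h1, if_pos h2, map_zero, map_zero]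
    rw [rho_b K N p hp1 hpN u huN hut]
    rw [if_pos (by simp only [upd_apply, Fin.mk.injEq]; split_ifs <;> omega)]
    rw [rho_b K N p hp1 hpN u huN hut]
    rw [if_neg (by simp only [upd_apply, Fin.mk.injEq]; split_ifs <;> omega)]
  · rw [if_neg h1, if_neg h2]
    simp

lemma rel2' (K : Type*) [Field K] (N : ℕ) (p q : ℕ) (hp1 : 1 ≤ p) (hq : q = p + 1)
    (hqN : q < N) :
    rho K N p * rho K N q * rho K N p = rho K N q * rho K N p * rho K N p := by
  have hpN : p < N := by omega
  have hq1 : 1 ≤ q := by omega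
  have hpt : (p + 1) % N = q := by rw [Nat.mod_eq_of_lt (by omega)]; omega
  obtain ⟨u, huN, hut, hup, huq⟩ :
      ∃ u, u < N ∧ (q + 1) % N = u ∧ u ≠ p ∧ u ≠ q := by
    rcases Nat.lt_or_ge (q + 1) N with h | h
    · exact ⟨q + 1, h, Nat.mod_eq_of_lt h, by omega, by omega⟩
    · exact ⟨0, by omega, by rw [show q + 1 = N by omega, Nat.mod_self], by omega, by omega⟩
  refine Module.Basis.ext (MvPolynomial.basisMonomials (Fin N) K) fun m => ?_
  simp only [Module.End.mul_apply]
  rw [rho_b K N p hp1 hpN q hqN hpt m]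
  by_cases h1 : 0 < m ⟨p, hpN⟩
  · rw [if_pos h1]
    rw [rho_b K N q hq1 hqN u huN hut]
    rw [if_pos (by simp only [upd_apply, Fin.mk.injEq]; split_ifs <;> omega)]
    rw [rho_b K N p hp1 hpN q hqN hpt]
    by_cases h2 : 2 ≤ m ⟨p, hpN⟩
    · rw [if_pos (by simp only [upd_apply, Fin.mk.injEq]; split_ifs <;> omega)]
      rw [rho_b K N p hp1 hpN q hqN hpt]
      rw [if_pos (by simp only [upd_apply, Fin.mk.injEq]; split_ifs <;> omega)]
      rw [rho_b K N q hq1 hqN u huN hut]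
      rw [if_pos (by simp only [upd_apply, Fin.mk.injEq]; split_ifs <;> omega)]
      congr 1
      ext x
      simp only [upd_apply, Fin.ext_iff]
      split_ifs <;> omega
    · rw [if_neg (by simp only [upd_apply, Fin.mk.injEq]; split_ifs <;> omega)]
      rw [rho_b K N p hp1 hpN q hqN hpt]
      rw [if_neg (by simp only [upd_apply, Fin.mk.injEq]; split_ifs <;> omega)]
      rw [map_zero]
  · rw [if_neg h1]
    simp

lemma rel3' (K : Type*) [Field K] (N : ℕ) (p q : ℕ) (hp1 : 1 ≤ p) (hpq : p + 1 < q)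
    (hqN : q < N) :
    rho K N p * rho K N q = rho K N q * rho K N p := by
  have hpN : p < N := by omega
  have hq1 : 1 ≤ q := by omega
  have hrN : p + 1 < N := by omega
  have hpt : (p + 1) % N = p + 1 := Nat.mod_eq_of_lt hrN
  obtain ⟨u, huN, hut, hup, huq, hur⟩ :
      ∃ u, u < N ∧ (q + 1) % N = u ∧ u ≠ p ∧ u ≠ q ∧ u ≠ p + 1 := by
    rcases Nat.lt_or_ge (q + 1) N with h | h
    · exact ⟨q + 1, h, Nat.mod_eq_of_lt h, by omega, by omega, by omega⟩
    · exact ⟨0, by omega, by rw [show q + 1 = N by omega, Nat.mod_self], by omega, by omega,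
        by omega⟩
  refine Module.Basis.ext (MvPolynomial.basisMonomials (Fin N) K) fun m => ?_
  simp only [Module.End.mul_apply]
  rw [rho_b K N q hq1 hqN u huN hut m, rho_b K N p hp1 hpN (p + 1) hrN hpt m]
  by_cases h1 : 0 < m ⟨q, hqN⟩ <;> by_cases h2 : 0 < m ⟨p, hpN⟩
  · rw [if_pos h1, if_pos h2]
    rw [rho_b K N p hp1 hpN (p + 1) hrN hpt]
    rw [if_pos (by simp only [upd_apply, Fin.mk.injEq]; split_ifs <;> omega)]
    rw [rho_b K N q hq1 hqN u huN hut]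
    rw [if_pos (by simp only [upd_apply, Fin.mk.injEq]; split_ifs <;> omega)]
    congr 1
    ext x
    simp only [upd_apply, Fin.ext_iff]
    split_ifs <;> omega
  · rw [if_pos h1, if_neg h2, map_zero]
    rw [rho_b K N p hp1 hpN (p + 1) hrN hpt]
    rw [if_neg (by simp only [upd_apply, Fin.mk.injEq]; split_ifs <;> omega)]
  · rw [if_neg h1, if_pos h2, map_zero]
    rw [rho_b K N q hq1 hqN u huN hut]
    rw [if_neg (by simp only [upd_apply, Fin.mk.injEq]; split_ifs <;> omega)]
  · rw [if_neg h1, if_neg h2]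
    simp

/-- The assignment `a_i ↦ ρ(a_i)` extends to a well-defined algebra homomorphism from the
local plactic algebra `P_N` to the endomorphism algebra of `K[x_1, …, x_{N-1}, x_0]`. -/
theorem stmt4 (K : Type*) [Field K] (N : ℕ) (hN : 3 ≤ N) :
    ∃ φ : PlacticAlgebra K N →ₐ[K] Module.End K (MvPolynomial (Fin N) K),
      ∀ i : ℕ, 1 ≤ i → i ≤ N - 1 → φ (pa K N i) = rho K N i := by
  have hrel : ∀ ⦃x y : FreeAlgebra K (Fin (N - 1))⦄, PlacticRel K N x y →
      (FreeAlgebra.lift K fun i : Fin (N - 1) => rho K N ((i : ℕ) + 1)) x =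
      (FreeAlgebra.lift K fun i : Fin (N - 1) => rho K N ((i : ℕ) + 1)) y := by
    intro x y h
    induction h with
    | plac1 i j hij =>
        simp only [map_mul, FreeAlgebra.lift_ι_apply]
        exact rel1 K N ((i : ℕ) + 1) ((j : ℕ) + 1) (by omega) (by omega)
          (by have := i.isLt; omega)
    | plac2 i j hij =>
        simp only [map_mul, FreeAlgebra.lift_ι_apply]
        exact rel2' K N ((i : ℕ) + 1) ((j : ℕ) + 1) (by omega) (by omega)
          (by have := j.isLt; omega)
    | comm i j hij =>
        simp only [map_mul, FreeAlgebra.lift_ι_apply]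
        exact rel3' K N ((i : ℕ) + 1) ((j : ℕ) + 1) (by omega) (by omega)
          (by have := j.isLt; omega)
  refine ⟨RingQuot.liftAlgHom K ⟨_, hrel⟩, fun i h1 h2 => ?_⟩
  rw [pa, dif_pos ⟨h1, h2⟩, RingQuot.liftAlgHom_mkAlgHom_apply, FreeAlgebra.lift_ι_apply]
  congr 1
  simp
  omega
end

section
/- The action of the local plactic algebra P_N on the polynomial ring k[x_1,...,x_{N-1},x_0] by the particle-moving operators is not faithful for N ≥ 4; specifically, the element a_2 a_1 a_3 a_2 − a_3 a_2 a_1 a_2 is a nonzero element of P_N that acts as the zero operator. -/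
-- the three matrices
def Mt1 (K : Type*) [Field K] : Matrix (Fin 3) (Fin 3) K := !![0,0,1;0,0,0;0,0,0]
def Mt2 (K : Type*) [Field K] : Matrix (Fin 3) (Fin 3) K := !![0,0,0;1,1,0;0,0,1]
def Mt3 (K : Type*) [Field K] : Matrix (Fin 3) (Fin 3) K := !![1,0,0;0,0,0;0,0,1]

lemma rel1_s6 (K : Type*) [Field K] : Mt2 K * Mt1 K * Mt2 K = Mt2 K * Mt2 K * Mt1 K := by
  ext i j; fin_cases i <;> fin_cases j <;>
    simp [Mt1, Mt2, Mt3, Matrix.mul_apply, Fin.sum_univ_three, Matrix.vecHead, Matrix.vecTail]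
lemma rel2 (K : Type*) [Field K] : Mt1 K * Mt2 K * Mt1 K = Mt2 K * Mt1 K * Mt1 K := by
  ext i j; fin_cases i <;> fin_cases j <;>
    simp [Mt1, Mt2, Mt3, Matrix.mul_apply, Fin.sum_univ_three, Matrix.vecHead, Matrix.vecTail]
lemma rel3 (K : Type*) [Field K] : Mt3 K * Mt2 K * Mt3 K = Mt3 K * Mt3 K * Mt2 K := by
  ext i j; fin_cases i <;> fin_cases j <;>
    simp [Mt1, Mt2, Mt3, Matrix.mul_apply, Fin.sum_univ_three, Matrix.vecHead, Matrix.vecTail]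
lemma rel4 (K : Type*) [Field K] : Mt2 K * Mt3 K * Mt2 K = Mt3 K * Mt2 K * Mt2 K := by
  ext i j; fin_cases i <;> fin_cases j <;>
    simp [Mt1, Mt2, Mt3, Matrix.mul_apply, Fin.sum_univ_three, Matrix.vecHead, Matrix.vecTail]
lemma rel5 (K : Type*) [Field K] : Mt1 K * Mt3 K = Mt3 K * Mt1 K := by
  ext i j; fin_cases i <;> fin_cases j <;>
    simp [Mt1, Mt2, Mt3, Matrix.mul_apply, Fin.sum_univ_three, Matrix.vecHead, Matrix.vecTail]
lemma relne (K : Type*) [Field K] :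
    Mt2 K * Mt1 K * Mt3 K * Mt2 K ≠ Mt3 K * Mt2 K * Mt1 K * Mt2 K := by
  intro h
  have h12 := congrFun (congrFun h 1) 2
  have hL : (Mt2 K * Mt1 K * Mt3 K * Mt2 K) 1 2 = 1 := by
    simp [Mt1, Mt2, Mt3, Matrix.mul_apply, Fin.sum_univ_three, Matrix.vecHead, Matrix.vecTail]
  have hR : (Mt3 K * Mt2 K * Mt1 K * Mt2 K) 1 2 = 0 := by
    simp [Mt1, Mt2, Mt3, Matrix.mul_apply, Fin.sum_univ_three, Matrix.vecHead, Matrix.vecTail]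
  rw [hL, hR] at h12
  exact one_ne_zero h12

/-- generator assignment -/
noncomputable def genM (K : Type*) [Field K] (N : ℕ) (v : Fin (N-1)) : Matrix (Fin 3) (Fin 3) K :=
  if (v : ℕ) = 0 then Mt1 K else if (v : ℕ) = 1 then Mt2 K else if (v : ℕ) = 2 then Mt3 K else 0

noncomputable def Fm (K : Type*) [Field K] (N : ℕ) :
    FreeAlgebra K (Fin (N-1)) →ₐ[K] Matrix (Fin 3) (Fin 3) K :=
  FreeAlgebra.lift K (genM K N)

lemma Fm_rel (K : Type*) [Field K] (N : ℕ) ⦃x y : FreeAlgebra K (Fin (N-1))⦄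
    (h : PlacticRel K N x y) : Fm K N x = Fm K N y := by
  induction h with
  | plac1 i j hij =>
      simp only [Fm, map_mul, FreeAlgebra.lift_ι_apply]
      rcases Nat.lt_or_ge (j : ℕ) 2 with hj | hj
      · interval_cases hj' : (j : ℕ)
        · simp only [genM, hij, hj']; norm_num; exact rel1_s6 K
        · simp only [genM, hij, hj']; norm_num; exact rel3 K
      · have h0 : genM K N i = 0 := by simp only [genM]; rw [if_neg, if_neg, if_neg] <;> omega
        rw [h0]; simp
  | plac2 i j hij =>
      simp only [Fm, map_mul, FreeAlgebra.lift_ι_apply]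
      rcases Nat.lt_or_ge (i : ℕ) 2 with hi | hi
      · interval_cases hi' : (i : ℕ)
        · simp only [genM, hij, hi']; norm_num; exact rel2 K
        · simp only [genM, hij, hi']; norm_num; exact rel4 K
      · have h0 : genM K N j = 0 := by simp only [genM]; rw [if_neg, if_neg, if_neg] <;> omega
        rw [h0]; simp
  | comm i j hij =>
      simp only [Fm, map_mul, FreeAlgebra.lift_ι_apply]
      rcases Nat.lt_or_ge (j : ℕ) 3 with hj | hj
      · have hi : (i : ℕ) = 0 := by omega
        have hj' : (j : ℕ) = 2 := by omega
        simp only [genM, hi, hj']; norm_num; exact rel5 K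
      · have h0 : genM K N j = 0 := by simp only [genM]; rw [if_neg, if_neg, if_neg] <;> omega
        rw [h0]; simp

lemma part1 (K : Type*) [Field K] (N : ℕ) (hN : 4 ≤ N) :
    pa K N 2 * pa K N 1 * pa K N 3 * pa K N 2 -
        pa K N 3 * pa K N 2 * pa K N 1 * pa K N 2 ≠ 0 := by
  intro hzero
  set Φ := RingQuot.liftAlgHom K (s := PlacticRel K N) ⟨Fm K N, Fm_rel K N⟩ with hΦ
  have hpa : ∀ (i : ℕ) (_ : 1 ≤ i) (_ : i ≤ N - 1),
      Φ (pa K N i) = genM K N ⟨i - 1, by omega⟩ := by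
    intro i h1 h2
    rw [pa, dif_pos ⟨h1, h2⟩, hΦ, RingQuot.liftAlgHom_mkAlgHom_apply]
    simp [Fm]
  have happ := congrArg Φ hzero
  rw [map_sub, map_mul, map_mul, map_mul, map_mul, map_mul, map_mul,
    hpa 1 (by omega) (by omega), hpa 2 (by omega) (by omega), hpa 3 (by omega) (by omega),
    map_zero] at happ
  have g1 : genM K N ⟨1 - 1, by omega⟩ = Mt1 K := by simp [genM]
  have g2 : genM K N ⟨2 - 1, by omega⟩ = Mt2 K := by simp [genM]
  have g3 : genM K N ⟨3 - 1, by omega⟩ = Mt3 K := by simp [genM]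
  rw [g1, g2, g3, sub_eq_zero] at happ
  -- contradiction with relne
  have h12 := congrFun (congrFun happ 1) 2
  have hL : (Mt2 K * Mt1 K * Mt3 K * Mt2 K) 1 2 = 1 := by
    simp [Mt1, Mt2, Mt3, Matrix.mul_apply, Fin.sum_univ_three, Matrix.vecHead, Matrix.vecTail]
  have hR : (Mt3 K * Mt2 K * Mt1 K * Mt2 K) 1 2 = 0 := by
    simp [Mt1, Mt2, Mt3, Matrix.mul_apply, Fin.sum_univ_three, Matrix.vecHead, Matrix.vecTail]
  rw [hL, hR] at h12
  exact one_ne_zero h12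

/-- one particle step on exponent vectors -/
noncomputable def stepF (N i : ℕ) (h : i < N) (h0 : 0 < N) (m : Fin N →₀ ℕ) : Fin N →₀ ℕ :=
  (m.update ⟨i, h⟩ (m ⟨i, h⟩ - 1)).update ⟨(i + 1) % N, Nat.mod_lt _ h0⟩
    ((m.update ⟨i, h⟩ (m ⟨i, h⟩ - 1)) ⟨(i + 1) % N, Nat.mod_lt _ h0⟩ + 1)

lemma rho_basis (K : Type*) [Field K] (N i : ℕ) (hi : 1 ≤ i) (h : i < N) (m : Fin N →₀ ℕ) :
    rho K N i ((MvPolynomial.basisMonomials (Fin N) K) m) =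
      if 0 < m ⟨i, h⟩ then
        (MvPolynomial.basisMonomials (Fin N) K) (stepF N i h (by omega) m)
      else 0 := by
  rw [rho, Module.Basis.constr_basis, dif_pos ⟨hi, h⟩]
  rfl

lemma stepF_apply (N i : ℕ) (hi : 1 ≤ i) (h : i < N) (h0 : 0 < N) (m : Fin N →₀ ℕ)
    (x : Fin N) :
    stepF N i h h0 m x =
      if (x : ℕ) = (i + 1) % N then m x + 1 else if (x : ℕ) = i then m x - 1 else m x := by
  have hne : (i + 1) % N ≠ i := by
    intro hc
    rcases Nat.lt_or_ge (i + 1) N with hlt | hge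
    · rw [Nat.mod_eq_of_lt hlt] at hc; omega
    · have : i + 1 = N := by omega
      rw [this, Nat.mod_self] at hc; omega
  rw [stepF]
  by_cases hx1 : x = (⟨(i + 1) % N, Nat.mod_lt _ h0⟩ : Fin N)
  · subst hx1
    simp [Finsupp.coe_update, Function.update_apply, Fin.ext_iff, hne]
  · by_cases hx2 : x = (⟨i, h⟩ : Fin N)
    · subst hx2
      simp only [Fin.ext_iff] at hx1
      simp [Finsupp.coe_update, Function.update_apply, Fin.ext_iff, hne, hx1]
    · simp only [Fin.ext_iff] at hx1 hx2
      simp [Finsupp.coe_update, Function.update_apply, Fin.ext_iff, hx1, hx2]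

lemma rho_key (K : Type*) [Field K] (N : ℕ) (hN : 4 ≤ N) :
    rho K N 2 * rho K N 1 * rho K N 3 * rho K N 2 =
      rho K N 3 * rho K N 2 * rho K N 1 * rho K N 2 := by
  have h0 : 0 < N := by omega
  have h1 : (1 : ℕ) < N := by omega
  have h2 : (2 : ℕ) < N := by omega
  have h3 : (3 : ℕ) < N := by omega
  have hm2 : (1 + 1) % N = 2 := Nat.mod_eq_of_lt h2
  have hm3 : (2 + 1) % N = 3 := Nat.mod_eq_of_lt h3
  have hm4 : (3 + 1) % N = 0 ∧ N = 4 ∨ (3 + 1) % N = 4 := by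
    rcases eq_or_lt_of_le hN with h | h
    · left; rw [← h]; exact ⟨by norm_num, rfl⟩
    · right; exact Nat.mod_eq_of_lt h
  set b := MvPolynomial.basisMonomials (Fin N) K with hb
  refine b.ext fun m => ?_
  simp only [Module.End.mul_apply]
  -- abbreviations for step values
  have S1 := stepF_apply N 1 (by omega) h1 h0
  have S2 := stepF_apply N 2 (by omega) h2 h0
  have S3 := stepF_apply N 3 (by omega) h3 h0
  by_cases hc2 : 0 < m ⟨2, h2⟩
  · rw [rho_basis K N 2 (by omega) h2 m, if_pos hc2]
    -- LHS chain
    have L3 : 0 < stepF N 2 h2 h0 m ⟨3, h3⟩ := by simp only [S2]; simp [hm3]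
    rw [rho_basis K N 3 (by omega) h3 _, if_pos L3]
    by_cases hc1 : 0 < m ⟨1, h1⟩
    · have L1 : 0 < stepF N 3 h3 h0 (stepF N 2 h2 h0 m) ⟨1, h1⟩ := by
        simp only [S3, S2]
        rcases hm4 with ⟨he, hn⟩ | he <;> simp [he, hm3] <;> omega
      rw [rho_basis K N 1 (by omega) h1 _, if_pos L1]
      have L2 : 0 < stepF N 1 h1 h0 (stepF N 3 h3 h0 (stepF N 2 h2 h0 m)) ⟨2, h2⟩ := by
        simp only [S1]; simp [hm2]
      rw [rho_basis K N 2 (by omega) h2 _, if_pos L2]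
      -- RHS chain
      have R1 : 0 < stepF N 2 h2 h0 m ⟨1, h1⟩ := by
        simp only [S2]; simp [hm3]; omega
      rw [rho_basis K N 1 (by omega) h1 _, if_pos R1]
      have R2 : 0 < stepF N 1 h1 h0 (stepF N 2 h2 h0 m) ⟨2, h2⟩ := by
        simp only [S1]; simp [hm2]
      rw [rho_basis K N 2 (by omega) h2 _, if_pos R2]
      have R3 : 0 < stepF N 2 h2 h0 (stepF N 1 h1 h0 (stepF N 2 h2 h0 m)) ⟨3, h3⟩ := by
        simp only [S2]; simp [hm3]
      rw [rho_basis K N 3 (by omega) h3 _, if_pos R3]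
      congr 1
      ext x
      simp only [S1, S2, S3]
      rcases hm4 with ⟨he, hn⟩ | he <;>
        · rw [hm2, hm3, he]
          split_ifs <;> omega
    · -- m at 1 is zero: both sides vanish
      have L1 : ¬ 0 < stepF N 3 h3 h0 (stepF N 2 h2 h0 m) ⟨1, h1⟩ := by
        simp only [S3, S2]
        rcases hm4 with ⟨he, hn⟩ | he <;> simp [he, hm3] <;> omega
      rw [rho_basis K N 1 (by omega) h1 _, if_neg L1]
      simp only [map_zero]
      have R1 : ¬ 0 < stepF N 2 h2 h0 m ⟨1, h1⟩ := by
        simp only [S2]; simp [hm3]; omega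
      rw [rho_basis K N 1 (by omega) h1 _, if_neg R1]
      simp only [map_zero]
  · rw [rho_basis K N 2 (by omega) h2 m, if_neg hc2]
    simp only [map_zero]


/-- The action of the local plactic algebra on `K[x_1, …, x_{N-1}, x_0]` is not faithful for
`N ≥ 4`: the element `a_2 a_1 a_3 a_2 − a_3 a_2 a_1 a_2` is nonzero but acts by zero. -/
theorem stmt6 (K : Type*) [Field K] (N : ℕ) (hN : 4 ≤ N) :
    (pa K N 2 * pa K N 1 * pa K N 3 * pa K N 2 -
        pa K N 3 * pa K N 2 * pa K N 1 * pa K N 2 ≠ 0) ∧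
      ∀ φ : PlacticAlgebra K N →ₐ[K] Module.End K (MvPolynomial (Fin N) K),
        (∀ i : ℕ, 1 ≤ i → i ≤ N - 1 → φ (pa K N i) = rho K N i) →
        φ (pa K N 2 * pa K N 1 * pa K N 3 * pa K N 2 -
            pa K N 3 * pa K N 2 * pa K N 1 * pa K N 2) = 0 := by
  constructor
  · exact part1 K N hN
  · intro φ hφ
    rw [map_sub]
    simp only [map_mul]
    rw [hφ 1 (by omega) (by omega), hφ 2 (by omega) (by omega), hφ 3 (by omega) (by omega),
      rho_key K N hN]
    exact sub_self _
end

section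
/- For a normal-form monomial m = a_{N-1}^{d_{N-1}} ⋯ a_2^{d_2} a_1^{k_1} ⋯ a_{N-1}^{k_{N-1}} in the partic algebra, applying m to the minimal input monomial x_1^{k_1} x_2^{k_2} ⋯ x_{N-1}^{k_{N-1}} gives the monomial x_2^{k_1 − d_2} x_3^{k_2 + d_2 − d_3} ⋯ x_{N-1}^{k_{N-2} + d_{N-2} − d_{N-1}} x_0^{k_{N-1} + d_{N-1}}. -/
/-- The operator `ρ(a_{N-1})^{d_{N-1}} ⋯ ρ(a_2)^{d_2} ρ(a_1)^{e_1} ⋯ ρ(a_{N-1})^{e_{N-1}}`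
by which a normal-form monomial of the partic algebra acts on `K[x_1, …, x_{N-1}, x_0]`. -/
noncomputable def rhoNf (K : Type*) [Field K] (N : ℕ) (d e : ℕ → ℕ) :
    Module.End K (MvPolynomial (Fin N) K) :=
  ((List.range (N - 2)).map fun t => rho K N (N - 1 - t) ^ d (N - 1 - t)).prod *
    ((List.range (N - 1)).map fun t => rho K N (t + 1) ^ e (t + 1)).prod

theorem List.prod_map_range_smul_of_step {M α : Type*} [Monoid M] [MulAction M α]
    (f : ℕ → M) (s : ℕ → α) (t : ℕ) (h : ∀ u < t, f u • s (u + 1) = s u) :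
    ((List.range t).map f).prod • s t = s 0 := by
  induction t with
  | zero => simp
  | succ t ih =>
    rw [List.range_succ, List.map_append, List.prod_append, List.map_singleton,
      List.prod_singleton, mul_smul, h t t.lt_succ_self, ih fun u hu => h u (by omega)]

section Configurations

variable (K : Type*) [Field K] (N : ℕ)

/-- Configurations are indexed by `ℕ` rather than `Fin N`, so that site arithmetic is plain
`omega` arithmetic; only the values at `0, …, N - 1` (with `0` standing for `x_0`) matter. -/
noncomputable def monomialOf (c : ℕ → ℕ) : MvPolynomial (Fin N) K :=
  MvPolynomial.basisMonomials (Fin N) K (Finsupp.equivFunOnFinite.symm fun x : Fin N => c x)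

variable {K N}

theorem monomialOf_congr {c c' : ℕ → ℕ} (h : ∀ x < N, c x = c' x) :
    monomialOf K N c = monomialOf K N c' := by
  unfold monomialOf
  congr 2
  exact funext fun x => h x x.isLt

def moveConfig (N i n : ℕ) (c : ℕ → ℕ) (x : ℕ) : ℕ :=
  let j := if i + 1 = N then 0 else i + 1
  if x = i then c i - n else if x = j then c j + n else c x

theorem rho_monomialOf {i : ℕ} (hi : 1 ≤ i) (hiN : i < N) {c : ℕ → ℕ} (hc : 0 < c i) :
    rho K N i (monomialOf K N c) = monomialOf K N (moveConfig N i 1 c) := by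
  have hnext : (i + 1) % N = if i + 1 = N then 0 else i + 1 := by
    split_ifs with h
    · rw [h, Nat.mod_self]
    · exact Nat.mod_eq_of_lt (by omega)
  unfold rho monomialOf
  rw [Module.Basis.constr_basis, dif_pos ⟨hi, hiN⟩, if_pos (by simpa using hc)]
  congr 1
  ext x
  simp only [Finsupp.update_apply, Finsupp.coe_equivFunOnFinite_symm, Fin.ext_iff, hnext,
    moveConfig]
  split_ifs <;> omega

theorem rho_pow_monomialOf {i : ℕ} (hi : 1 ≤ i) (hiN : i < N) {n : ℕ} {c : ℕ → ℕ}
    (hn : n ≤ c i) :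
    (rho K N i ^ n) (monomialOf K N c) = monomialOf K N (moveConfig N i n c) := by
  induction n generalizing c with
  | zero =>
    exact monomialOf_congr fun x _ => by
      simp only [moveConfig]; split_ifs <;> (try subst_vars) <;> omega
  | succ n ih =>
    rw [pow_succ, Module.End.mul_apply, rho_monomialOf hi hiN (by omega),
      ih (by simp only [moveConfig]; split_ifs <;> omega)]
    exact monomialOf_congr fun x _ => by
      simp only [moveConfig]; split_ifs <;> (try subst_vars) <;> omega

end Configurations

section Sweeps

variable {K : Type*} [Field K] {N : ℕ}

/-- The configuration reached from the minimal input once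
`a_{N-1}^{e_{N-1}}, …, a_{s+1}^{e_{s+1}}` have acted: each of them has emptied its site into the
next one, which was empty at that time. -/
def shiftConfig (N : ℕ) (e : ℕ → ℕ) (s x : ℕ) : ℕ :=
  if x = 0 then (if s = N - 1 then 0 else e (N - 1))
  else if x ≤ s then e x
  else if x = s + 1 then 0
  else e (x - 1)

theorem rho_pow_monomialOf_shiftConfig (e : ℕ → ℕ) {s : ℕ} (hs : s + 1 < N) :
    (rho K N (s + 1) ^ e (s + 1)) (monomialOf K N (shiftConfig N e (s + 1))) =
      monomialOf K N (shiftConfig N e s) := by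
  rw [rho_pow_monomialOf (by omega) hs (by simp [shiftConfig])]
  exact monomialOf_congr fun x hx => by
    simp only [moveConfig, shiftConfig]
    split_ifs <;> (try subst_vars) <;>
      (try simp only [Nat.add_sub_cancel, not_true_eq_false] at *) <;> omega

theorem prod_rho_pow_monomialOf_shiftConfig (e : ℕ → ℕ) {t : ℕ} (ht : t < N) :
    ((List.range t).map fun u => rho K N (u + 1) ^ e (u + 1)).prod
      (monomialOf K N (shiftConfig N e t)) = monomialOf K N (shiftConfig N e 0) :=
  List.prod_map_range_smul_of_step (fun u => rho K N (u + 1) ^ e (u + 1))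
    (fun u => monomialOf K N (shiftConfig N e u)) t
    fun _ hu => rho_pow_monomialOf_shiftConfig e (by omega)

/-- The configuration reached from `shiftConfig N e 0` once `a_2^{d_2}, …, a_{i-1}^{d_{i-1}}` have
acted: site `i` now also holds the `d_{i-1}` particles that arrived from site `i - 1`. -/
def cascadeConfig (N : ℕ) (d e : ℕ → ℕ) (i x : ℕ) : ℕ :=
  if x = 0 then e (N - 1) + (if i = N then d (N - 1) else 0)
  else if x = 1 then 0
  else if x < i then e (x - 1) + d (x - 1) - d x
  else if x = i then e (x - 1) + d (x - 1)
  else e (x - 1)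

theorem rho_pow_monomialOf_cascadeConfig (d e : ℕ → ℕ) {i : ℕ} (hi : 2 ≤ i) (hiN : i < N)
    (hd : d i ≤ e (i - 1) + d (i - 1)) :
    (rho K N i ^ d i) (monomialOf K N (cascadeConfig N d e i)) =
      monomialOf K N (cascadeConfig N d e (i + 1)) := by
  rw [rho_pow_monomialOf (by omega) hiN (by simp only [cascadeConfig]; split_ifs <;> omega)]
  exact monomialOf_congr fun x hx => by
    simp only [moveConfig, cascadeConfig]
    split_ifs <;> (try subst_vars) <;>
      (try simp only [Nat.add_sub_cancel, not_true_eq_false] at *) <;> omega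

theorem prod_rho_pow_monomialOf_cascadeConfig (d e : ℕ → ℕ) {t : ℕ} (ht : t + 2 ≤ N)
    (hd : ∀ i, 2 ≤ i → i < N → d i ≤ e (i - 1) + d (i - 1)) :
    ((List.range t).map fun u => rho K N (N - 1 - u) ^ d (N - 1 - u)).prod
      (monomialOf K N (cascadeConfig N d e (N - t))) = monomialOf K N (cascadeConfig N d e N) :=
  List.prod_map_range_smul_of_step (fun u => rho K N (N - 1 - u) ^ d (N - 1 - u))
    (fun u => monomialOf K N (cascadeConfig N d e (N - u))) t
    fun u hu => by
      have step := rho_pow_monomialOf_cascadeConfig (K := K) (N := N) d e (i := N - 1 - u)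
        (by omega) (by omega) (hd _ (by omega) (by omega))
      rw [show N - (u + 1) = N - 1 - u by omega, show N - u = N - 1 - u + 1 by omega]
      exact step

end Sweeps

/-- Applying a normal-form monomial to its minimal input configuration
`(k_1, …, k_{N-1}, 0)` yields the output configuration
`(0, k_1 − d_2, k_2 + d_2 − d_3, …, k_{N-2} + d_{N-2} − d_{N-1}, k_{N-1} + d_{N-1})`
(the last entry at position `0`); here we use the convention `d_1 = 0`. -/
theorem stmt13 (K : Type*) [Field K] (N : ℕ) (hN : 3 ≤ N) (d e : ℕ → ℕ) (hd1 : d 1 = 0)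
    (h21 : d 2 ≤ e 1) (hnf : ∀ i, 3 ≤ i → i ≤ N - 1 → d i ≤ d (i - 1) + e (i - 1)) :
    rhoNf K N d e (MvPolynomial.basisMonomials (Fin N) K
      (Finsupp.equivFunOnFinite.symm fun i : Fin N => if (i : ℕ) = 0 then 0 else e (i : ℕ))) =
    MvPolynomial.basisMonomials (Fin N) K
      (Finsupp.equivFunOnFinite.symm fun i : Fin N =>
        if (i : ℕ) = 0 then e (N - 1) + d (N - 1)
        else if (i : ℕ) = 1 then 0
        else e ((i : ℕ) - 1) + d ((i : ℕ) - 1) - d (i : ℕ)) := by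
  have hd : ∀ i, 2 ≤ i → i < N → d i ≤ e (i - 1) + d (i - 1) := by
    intro i hi hiN
    obtain rfl | hi3 : i = 2 ∨ 3 ≤ i := by omega
    · simpa [hd1] using h21
    · have := hnf i hi3 (by omega)
      omega
  change rhoNf K N d e (monomialOf K N fun x => if x = 0 then 0 else e x) =
    monomialOf K N fun x => if x = 0 then e (N - 1) + d (N - 1) else if x = 1 then 0
      else e (x - 1) + d (x - 1) - d x
  have hin : monomialOf K N (fun x => if x = 0 then 0 else e x) =
      monomialOf K N (shiftConfig N e (N - 1)) :=
    monomialOf_congr fun x hx => by simp only [shiftConfig]; split_ifs <;> omega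
  have hmid : monomialOf K N (shiftConfig N e 0) =
      monomialOf K N (cascadeConfig N d e (N - (N - 2))) := by
    rw [show N - (N - 2) = 2 by omega]
    exact monomialOf_congr fun x hx => by
      simp only [shiftConfig, cascadeConfig]
      split_ifs <;> (try subst_vars) <;>
        (try simp only [show (2 : ℕ) - 1 = 1 from rfl, hd1]) <;> omega
  rw [rhoNf, Module.End.mul_apply, hin, prod_rho_pow_monomialOf_shiftConfig e (by omega), hmid,
    prod_rho_pow_monomialOf_cascadeConfig d e (by omega) hd]
  exact monomialOf_congr fun x hx => by simp only [cascadeConfig]; split_ifs <;> omega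
end
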